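/- Let R = ℤ[x,y]/(x^3, y^3, xy - x^2 - y^2), ψ = y - 2x, and let d be any integer. Then (d·x)·(d·x + ψ)·(d·x + 2ψ) = (3d^2 - 6d)·x^2·y in R. -/
import Mathlib


open MvPolynomial

noncomputable section

def chowIdeal : Ideal (MvPolynomial (Fin 2) ℤ) :=
  Ideal.span {(X 0) ^ 3, (X 1) ^ 3, X 0 * X 1 - (X 0) ^ 2 - (X 1) ^ 2}

/-- The ring `ℤ[x,y]/(x^3, y^3, xy - x^2 - y^2)`. -/
abbrev ChowRing : Type := MvPolynomial (Fin 2) ℤ ⧸ chowIdeal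

def x : ChowRing := Ideal.Quotient.mk chowIdeal (X 0)

def y : ChowRing := Ideal.Quotient.mk chowIdeal (X 1)

theorem inflection_tangents_class (d : ℤ) :
    (d • x) * (d • x + (y - 2 * x)) * (d • x + 2 * (y - 2 * x))
      = (3 * d ^ 2 - 6 * d) • (x ^ 2 * y) := by
  have hx3 : x ^ 3 = 0 := by
    rw [x, ← map_pow, Ideal.Quotient.eq_zero_iff_mem]
    exact Ideal.subset_span (by simp)
  have hxy : x * y = x ^ 2 + y ^ 2 := by
    rw [x, y, ← map_mul, ← map_pow, ← map_pow, ← map_add, Ideal.Quotient.eq, chowIdeal]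
    apply Ideal.subset_span
    simp only [Set.mem_insert_iff, Set.mem_singleton_iff]
    right; right; ring
  have hxy2 : x * y ^ 2 = x ^ 2 * y := by
    have := congrArg (· * x) hxy
    linear_combination -this - hx3
  simp only [zsmul_eq_mul]
  push_cast
  linear_combination (d^3 - 6*d^2 + 8*d) * hx3 + 2*d*hxy2

end
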